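/- arXiv:0708.2347 — 2 statements merged into one kernel-verified Lean document; each statement's English description precedes it below -/
import Mathlib

section
/- For all integers r, s and all natural numbers n, the following identity holds: V_2·(Σ_{i=0}^{n} (−1)^i·V_{r+2i}·V_{s+2i}) = V_{r+s−2} + (−1)^n·V_{4n+r+s+2} + ε_n·V_2·q^r·V_{s−r}, where ε_n = 1 if n is even and ε_n = 0 if n is odd. -/
/-!
Everything follows from the product formula `V a * V b = V (a + b) + q ^ |a| * V (b - a)`,
proved by noting that both sides satisfy the recurrence in `a` and agree at `a = 0, 1`.
With `q ^ 2 = 1` it gives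
`V 2 * V (r + 2i) * V (s + 2i) = V (m + 2) + V (m - 2) + V 2 * q ^ |r| * V (s - r)`
for `m = r + s + 4i`; the first two terms telescope in the alternating sum and the last one is
constant in `i`.
-/

open Finset

theorem pow_natAbs_add_one_of_mul_self_eq_one {M : Type*} [Monoid M] {q : M} (hq : q * q = 1)
    (m : ℤ) : q ^ (m + 1).natAbs = q * q ^ m.natAbs := by
  rcases le_or_gt 0 m with hm | hm
  · rw [show (m + 1).natAbs = m.natAbs + 1 by omega, pow_succ']
  · rw [show m.natAbs = (m + 1).natAbs + 1 by omega, pow_succ', ← mul_assoc, hq, one_mul]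

theorem pow_natAbs_add_two_of_mul_self_eq_one {M : Type*} [Monoid M] {q : M} (hq : q * q = 1)
    (m : ℤ) : q ^ (m + 2).natAbs = q ^ m.natAbs := by
  rw [show m + 2 = m + 1 + 1 by ring, pow_natAbs_add_one_of_mul_self_eq_one hq,
    pow_natAbs_add_one_of_mul_self_eq_one hq, ← mul_assoc, hq, one_mul]

theorem pow_natAbs_add_two_mul_of_mul_self_eq_one {M : Type*} [Monoid M] {q : M}
    (hq : q * q = 1) (m : ℤ) (k : ℕ) : q ^ (m + 2 * k).natAbs = q ^ m.natAbs := by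
  induction k with
  | zero => simp
  | succ k ih =>
    rw [show m + 2 * ((k + 1 : ℕ) : ℤ) = m + 2 * k + 2 by push_cast; ring,
      pow_natAbs_add_two_of_mul_self_eq_one hq, ih]

theorem sum_range_neg_one_pow_mul_add {R : Type*} [CommRing R] (f : ℕ → R) (n : ℕ) :
    ∑ i ∈ range (n + 1), (-1 : R) ^ i * (f (i + 1) + f i) = f 0 + (-1) ^ n * f (n + 1) := by
  calc ∑ i ∈ range (n + 1), (-1 : R) ^ i * (f (i + 1) + f i)
      = ∑ i ∈ range (n + 1), ((-1) ^ i * f i - (-1) ^ (i + 1) * f (i + 1)) :=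
        sum_congr rfl fun i _ => by ring
    _ = f 0 + (-1) ^ n * f (n + 1) := by rw [sum_range_sub']; ring

theorem sum_range_succ_neg_one_pow {R : Type*} [Ring R] (n : ℕ) :
    ∑ i ∈ range (n + 1), (-1 : R) ^ i = if Even n then 1 else 0 := by
  by_cases hn : Even n <;> simp [Nat.even_add_one, hn]

def IsLucasRec {R : Type*} [CommRing R] (p q : R) (x : ℤ → R) : Prop :=
  ∀ n, x (n + 2) = p * x (n + 1) - q * x n

namespace IsLucasRec

variable {R : Type*} [CommRing R] {p q : R} {x y : ℤ → R}

theorem of_sub (h : ∀ n, x n = p * x (n - 1) - q * x (n - 2)) : IsLucasRec p q x := fun n => by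
  simpa [show n + 2 - 1 = n + 1 by ring] using h (n + 2)

theorem add (hx : IsLucasRec p q x) (hy : IsLucasRec p q y) : IsLucasRec p q (x + y) :=
  fun n => by simp only [Pi.add_apply, hx n, hy n]; ring

theorem mul_const (hx : IsLucasRec p q x) (c : R) : IsLucasRec p q (fun n => x n * c) :=
  fun n => by simp only [hx n]; ring

theorem comp_add_const (hx : IsLucasRec p q x) (b : ℤ) : IsLucasRec p q (fun n => x (n + b)) :=
  fun n => by simpa only [add_right_comm] using hx (n + b)

theorem pow_natAbs_mul_comp_const_sub (hq : q * q = 1) (hx : IsLucasRec p q x) (b : ℤ) :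
    IsLucasRec p q (fun n => q ^ n.natAbs * x (b - n)) := fun n => by
  have hrec := hx (b - (n + 2))
  rw [show b - (n + 2) + 2 = b - n by ring, show b - (n + 2) + 1 = b - (n + 1) by ring] at hrec
  show q ^ (n + 2).natAbs * x (b - (n + 2)) =
    p * (q ^ (n + 1).natAbs * x (b - (n + 1))) - q * (q ^ n.natAbs * x (b - n))
  rw [pow_natAbs_add_two_of_mul_self_eq_one hq, pow_natAbs_add_one_of_mul_self_eq_one hq]
  linear_combination q ^ n.natAbs * q * hrec - q ^ n.natAbs * x (b - (n + 2)) * hq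

theorem eq_of_eq_zero_of_eq_one (hq : IsUnit q) (hx : IsLucasRec p q x) (hy : IsLucasRec p q y)
    (h0 : x 0 = y 0) (h1 : x 1 = y 1) : x = y := by
  suffices ∀ n, x n = y n ∧ x (n + 1) = y (n + 1) from funext fun n => (this n).1
  intro n
  induction n using Int.induction_on with
  | zero => exact ⟨h0, h1⟩
  | succ n ih => exact ⟨ih.2, by rw [add_assoc, one_add_one_eq_two, hx, hy, ih.1, ih.2]⟩
  | pred n ih =>
    refine ⟨hq.mul_left_cancel ?_, by simpa using ih.1⟩
    have hxn := hx (-n - 1)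
    have hyn := hy (-n - 1)
    simp only [show -(n : ℤ) - 1 + 2 = -n + 1 by ring, show -(n : ℤ) - 1 + 1 = -n by ring] at hxn hyn
    linear_combination hxn - hyn + p * ih.1 - ih.2

/-- Here `q ^ |a|` stands for `q ^ a`, as `q = q⁻¹`. -/
theorem mul_eq (hq : q * q = 1) (hV : IsLucasRec p q x) (h0 : x 0 = 2) (h1 : x 1 = p)
    (a b : ℤ) : x a * x b = x (a + b) + q ^ a.natAbs * x (b - a) := by
  have hrec : IsLucasRec p q (fun a => x (a + b) + q ^ a.natAbs * x (b - a)) :=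
    (hV.comp_add_const b).add (hV.pow_natAbs_mul_comp_const_sub hq b)
  refine congrFun (eq_of_eq_zero_of_eq_one (IsUnit.of_mul_eq_one q hq) (hV.mul_const (x b))
    hrec ?_ ?_) a
  · simp only [zero_add, sub_zero, Int.natAbs_zero, pow_zero, one_mul, h0]
    ring
  · have := hV (b - 1)
    simp only [show b - 1 + 2 = 1 + b by ring, show b - 1 + 1 = b by ring] at this
    simp [h1, this]

end IsLucasRec

theorem stmt_4_general (p q : ℤ) (hq : q = 1 ∨ q = -1)
    (V : ℤ → ℤ)
    (hV0 : V 0 = 2) (hV1 : V 1 = p)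
    (hVrec : ∀ n : ℤ, V n = p * V (n - 1) - q * V (n - 2))
    (r s : ℤ) (n : ℕ) :
    V 2 * (∑ i ∈ Finset.range (n + 1), (-1 : ℤ) ^ i * (V (r + 2 * i) * V (s + 2 * i))) =
      V (r + s - 2) + (-1 : ℤ) ^ n * V (4 * n + r + s + 2) +
        (if Even n then (1 : ℤ) else 0) * V 2 * q ^ r.natAbs * V (s - r) := by
  have hqq : q * q = 1 := by rcases hq with rfl | rfl <;> norm_num
  have hprod := (IsLucasRec.of_sub hVrec).mul_eq hqq hV0 hV1
  have hterm (i : ℕ) : V 2 * ((-1) ^ i * (V (r + 2 * i) * V (s + 2 * i))) =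
      (-1) ^ i * (V (r + s + 4 * (i + 1 : ℕ) - 2) + V (r + s + 4 * i - 2)) +
        (-1) ^ i * (V 2 * q ^ r.natAbs * V (s - r)) := by
    have hrs := hprod (r + 2 * i) (s + 2 * i)
    have h2 := hprod 2 (r + s + 4 * i)
    rw [pow_natAbs_add_two_mul_of_mul_self_eq_one hqq, show s + 2 * i - (r + 2 * i) = s - r by ring,
      show r + 2 * i + (s + 2 * i) = r + s + 4 * i by ring] at hrs
    rw [show (2 : ℤ).natAbs = 2 by rfl, sq, hqq, one_mul,
      show 2 + (r + s + 4 * i) = r + s + 4 * (i + 1 : ℕ) - 2 by push_cast; ring] at h2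
    linear_combination (-1) ^ i * V 2 * hrs + (-1) ^ i * h2
  rw [mul_sum, sum_congr rfl fun i _ => hterm i, sum_add_distrib,
    sum_range_neg_one_pow_mul_add (fun i => V (r + s + 4 * i - 2)), ← sum_mul,
    sum_range_succ_neg_one_pow]
  rw [Nat.cast_zero, mul_zero, add_zero,
    show r + s + 4 * ((n + 1 : ℕ) : ℤ) - 2 = 4 * n + r + s + 2 by push_cast; ring]
  ring

theorem stmt_4 (p q : ℤ) (hp : p ≠ 0) (hq : q = 1 ∨ q = -1)
    (hΔ : p ^ 2 - 4 * q ≠ 0)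
    (U V : ℤ → ℤ)
    (hU0 : U 0 = 0) (hU1 : U 1 = 1)
    (hUrec : ∀ n : ℤ, U n = p * U (n - 1) - q * U (n - 2))
    (hV0 : V 0 = 2) (hV1 : V 1 = p)
    (hVrec : ∀ n : ℤ, V n = p * V (n - 1) - q * V (n - 2))
    (r s : ℤ) (n : ℕ) :
    V 2 * (∑ i ∈ Finset.range (n + 1), (-1 : ℤ) ^ i * (V (r + 2 * i) * V (s + 2 * i))) =
      V (r + s - 2) + (-1 : ℤ) ^ n * V (4 * n + r + s + 2) +
        (if Even n then (1 : ℤ) else 0) * V 2 * q ^ r.natAbs * V (s - r) :=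
  stmt_4_general p q hq V hV0 hV1 hVrec r s n
end

section
/- For all integers r, s and all natural numbers m, the following two identities hold: Δ·(Σ_{i=0}^{2m} (−1)^i·U_{r+2i}·U_{s+2i}) = d_m·V_{4m+r+s} − q^r·V_{s−r}, and Δ·(Σ_{i=0}^{2m+1} (−1)^i·U_{r+2i}·U_{s+2i}) = −p·Δ·c_m·U_{4m+r+s+2}. -/
/-!
Everything reduces to the product-to-sum formulas
`Δ U_a U_b = V_{a+b} - q^|b| V_{a-b}` and `V_a V_b = V_{a+b} + q^|b| V_{a-b}`, each proved by
observing that both sides satisfy the recurrence in `a` and agree at `a = 0, 1`.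
The first turns the alternating sum into an alternating sum of `V_{r+s+4i}` plus a constant;
since `V_2 V_n = V_{n+2} + V_{n-2}`, multiplying by `V_2` makes that sum telescope, and the
product-to-sum formulas once more identify the result with `V_2` (resp. `U_4 = p V_2`) times
the claimed closed form; both factors are nonzero, as `p^2 - 2q ≠ 0` for `q = ±1`.
-/

open Finset

variable {R : Type*} [CommRing R]

def LucasRec (p q : R) (f : ℤ → R) : Prop :=
  ∀ n, f (n + 2) = p * f (n + 1) - q * f n

namespace LucasRec

variable {p q : R} {f g : ℤ → R}

theorem of_forall_eq_sub (h : ∀ n, f n = p * f (n - 1) - q * f (n - 2)) : LucasRec p q f := by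
  intro n
  have hn := h (n + 2)
  rwa [add_sub_assoc, show (2 : ℤ) - 1 = 1 by norm_num, add_sub_cancel_right] at hn

theorem comp_add_const (hf : LucasRec p q f) (k : ℤ) : LucasRec p q (fun n => f (n + k)) := by
  intro n
  simpa only [add_right_comm _ k] using hf (n + k)

theorem const_mul (hf : LucasRec p q f) (a : R) : LucasRec p q (fun n => a * f n) := by
  intro n
  dsimp only
  rw [hf n]
  ring

theorem add (hf : LucasRec p q f) (hg : LucasRec p q g) : LucasRec p q (f + g) := by
  intro n
  simp only [Pi.add_apply, hf n, hg n]
  ring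

theorem sub (hf : LucasRec p q f) (hg : LucasRec p q g) : LucasRec p q (f - g) := by
  intro n
  simp only [Pi.sub_apply, hf n, hg n]
  ring

theorem eq_zero (hq : IsUnit q) (hf : LucasRec p q f) (h0 : f 0 = 0) (h1 : f 1 = 0) :
    f = 0 := by
  have h : ∀ n : ℤ, f n = 0 ∧ f (n + 1) = 0 := by
    intro n
    induction n using Int.induction_on with
    | zero => exact ⟨h0, by simpa using h1⟩
    | succ k ih =>
      refine ⟨ih.2, ?_⟩
      rw [add_assoc, one_add_one_eq_two, hf, ih.1, ih.2]
      ring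
    | pred k ih =>
      have hk := hf (-k - 1)
      rw [show -(k : ℤ) - 1 + 2 = -k + 1 by ring, sub_add_cancel, ih.1, ih.2] at hk
      exact ⟨hq.mul_right_eq_zero.mp (by linear_combination hk), by simpa using ih.1⟩
  exact funext fun n => (h n).1

theorem ext (hq : IsUnit q) (hf : LucasRec p q f) (hg : LucasRec p q g) (h0 : f 0 = g 0)
    (h1 : f 1 = g 1) : f = g :=
  sub_eq_zero.mp (eq_zero hq (hf.sub hg) (by simp [h0]) (by simp [h1]))

end LucasRec

section NatAbsPow

variable {M : Type*} [Monoid M] {q : M}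

theorem pow_natAbs_add (hq : q * q = 1) (a b : ℤ) :
    q ^ (a + b).natAbs = q ^ a.natAbs * q ^ b.natAbs := by
  have hq2 : q ^ 2 = 1 := by rwa [sq]
  rw [← pow_add, pow_eq_pow_mod _ hq2, pow_eq_pow_mod (a.natAbs + b.natAbs) hq2]
  congr 1
  omega

theorem pow_natAbs_of_even (hq : q * q = 1) {a : ℤ} (ha : Even a) : q ^ a.natAbs = 1 := by
  obtain ⟨k, rfl⟩ := ha
  have hk : (k + k).natAbs = 2 * k.natAbs := by omega
  rw [hk, pow_mul, sq, hq, one_pow]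

theorem pow_natAbs_mul_self (hq : q * q = 1) (a : ℤ) : q ^ a.natAbs * q ^ a.natAbs = 1 := by
  rw [← pow_natAbs_add hq, pow_natAbs_of_even hq (Even.add_self a)]

end NatAbsPow

/-- For a unit `q`, `n ↦ q⁻ⁿ f (-n)` satisfies the same recurrence;
when `q * q = 1`, `q⁻ⁿ = q ^ n.natAbs`. -/
theorem LucasRec.reflect {p q : R} {f : ℤ → R} (hq : q * q = 1) (hf : LucasRec p q f) :
    LucasRec p q (fun n => q ^ n.natAbs * f (-n)) := by
  intro n
  dsimp only
  have hn := hf (-n - 2)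
  rw [show -n - 2 + 2 = -n by ring, show -n - 2 + 1 = -(n + 1) by ring] at hn
  rw [pow_natAbs_add hq n 2, pow_natAbs_add hq n 1, pow_natAbs_of_even hq even_two,
    Int.natAbs_one, pow_one, show -(n + 2) = -n - 2 by ring]
  linear_combination q * q ^ n.natAbs * hn - q ^ n.natAbs * f (-n - 2) * hq

structure IsLucasPair (p q : R) (U V : ℤ → R) : Prop where
  rec_U : LucasRec p q U
  rec_V : LucasRec p q V
  U_zero : U 0 = 0
  U_one : U 1 = 1
  V_zero : V 0 = 2
  V_one : V 1 = p

namespace IsLucasPair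

variable {p q : R} {U V : ℤ → R}

theorem V_two (h : IsLucasPair p q U V) : V 2 = p ^ 2 - 2 * q := by
  have h2 := h.rec_V 0
  rw [zero_add, zero_add, h.V_one, h.V_zero] at h2
  rw [h2]
  ring

theorem U_four (h : IsLucasPair p q U V) : U 4 = p * V 2 := by
  have h2 := h.rec_U 0
  have h3 := h.rec_U 1
  have h4 := h.rec_U 2
  norm_num [h.U_zero, h.U_one] at h2 h3 h4
  rw [h4, h3, h2, h.V_two]
  ring

theorem V_neg_one (h : IsLucasPair p q U V) (hq : q * q = 1) : V (-1) = q * p := by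
  have h1 := h.rec_V (-1)
  norm_num [h.V_zero, h.V_one] at h1
  linear_combination q * h1 - V (-1) * hq

theorem V_neg (h : IsLucasPair p q U V) (hq : q * q = 1) (n : ℤ) :
    V (-n) = q ^ n.natAbs * V n := by
  have hrefl : (fun n => q ^ n.natAbs * V (-n)) = V :=
    h.rec_V.reflect hq |>.ext ((.of_mul_eq_one q hq)) h.rec_V (by simp [h.V_zero])
      (by simp [h.V_neg_one hq, h.V_one, ← mul_assoc, hq])
  have hn := congrFun hrefl n
  linear_combination q ^ n.natAbs * hn - V (-n) * pow_natAbs_mul_self hq n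

theorem delta_mul_U (h : IsLucasPair p q U V) (hq : q * q = 1) (n : ℤ) :
    (p ^ 2 - 4 * q) * U n = V (n + 1) - q * V (n - 1) := by
  have hrec : LucasRec p q (fun n => V (n + 1) - q * V (n - 1)) :=
    (h.rec_V.comp_add_const 1).sub ((h.rec_V.comp_add_const (-1)).const_mul q)
  refine congrFun ((h.rec_U.const_mul _).ext ((.of_mul_eq_one q hq)) hrec ?_ ?_) n
  · simp [h.U_zero, h.V_one, h.V_neg_one hq, ← mul_assoc, hq]
  · norm_num [h.U_one, h.V_two, h.V_zero]
    ring

theorem delta_mul_U_mul_U (h : IsLucasPair p q U V) (hq : q * q = 1) (a b : ℤ) :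
    (p ^ 2 - 4 * q) * (U a * U b) = V (a + b) - q ^ b.natAbs * V (a - b) := by
  have hlhs : LucasRec p q (fun a => (p ^ 2 - 4 * q) * U b * U a) :=
    h.rec_U.const_mul _
  have hrhs : LucasRec p q (fun a => V (a + b) - q ^ b.natAbs * V (a - b)) :=
    (h.rec_V.comp_add_const b).sub ((h.rec_V.comp_add_const (-b)).const_mul _)
  have key := congrFun (hlhs.ext ((.of_mul_eq_one q hq)) hrhs ?_ ?_) a
  · linear_combination key
  · simp only [h.U_zero, mul_zero, zero_add, zero_sub, h.V_neg hq, ← mul_assoc,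
      pow_natAbs_mul_self hq, one_mul, sub_self]
  · have hb := h.V_neg hq (b - 1)
    have hq1 := pow_natAbs_add hq (b - 1) 1
    rw [neg_sub] at hb
    rw [sub_add_cancel, Int.natAbs_one, pow_one] at hq1
    rw [h.U_one, mul_one, add_comm 1 b, hb, hq1, h.delta_mul_U hq]
    linear_combination q * V (b - 1) * pow_natAbs_mul_self hq (b - 1)

theorem V_mul_V (h : IsLucasPair p q U V) (hq : q * q = 1) (a b : ℤ) :
    V a * V b = V (a + b) + q ^ b.natAbs * V (a - b) := by
  have hlhs : LucasRec p q (fun a => V b * V a) := h.rec_V.const_mul _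
  have hrhs : LucasRec p q (fun a => V (a + b) + q ^ b.natAbs * V (a - b)) :=
    (h.rec_V.comp_add_const b).add ((h.rec_V.comp_add_const (-b)).const_mul _)
  have key := congrFun (hlhs.ext (.of_mul_eq_one q hq) hrhs ?_ ?_) a
  · linear_combination key
  · simp only [h.V_zero, zero_add, zero_sub, h.V_neg hq, ← mul_assoc,
      pow_natAbs_mul_self hq, one_mul]
    ring
  · have hb := h.V_neg hq (b - 1)
    have hq1 := pow_natAbs_add hq (b - 1) 1
    have hrec := h.rec_V (b - 1)
    rw [neg_sub] at hb
    rw [sub_add_cancel, Int.natAbs_one, pow_one] at hq1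
    rw [show b - 1 + 2 = b + 1 by ring, sub_add_cancel] at hrec
    rw [h.V_one, add_comm 1 b, hb, hq1, hrec]
    linear_combination (-q) * V (b - 1) * pow_natAbs_mul_self hq (b - 1)

theorem V_two_mul_sum (h : IsLucasPair p q U V) (hq : q * q = 1) (t : ℤ) (N : ℕ) :
    V 2 * ∑ i ∈ range N, (-1 : R) ^ i * V (t + 4 * i) =
      V (t - 2) - (-1) ^ N * V (t + 4 * N - 2) := by
  induction N with
  | zero => simp
  | succ N ih =>
    have hV2 := h.V_mul_V hq (t + 4 * N) 2
    rw [pow_natAbs_of_even hq even_two, one_mul] at hV2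
    rw [sum_range_succ, mul_add, ih, pow_succ, Nat.cast_succ,
      show t + 4 * ((N : ℤ) + 1) - 2 = t + 4 * N + 2 by ring]
    linear_combination (-1 : R) ^ N * hV2

theorem delta_mul_U_mul_U_add_two_mul (h : IsLucasPair p q U V) (hq : q * q = 1)
    (r s i : ℤ) :
    (p ^ 2 - 4 * q) * (U (r + 2 * i) * U (s + 2 * i)) =
      V (r + s + 4 * i) - q ^ r.natAbs * V (s - r) := by
  have hs := pow_natAbs_add hq (s - r) r
  rw [sub_add_cancel] at hs
  rw [h.delta_mul_U_mul_U hq, show r + 2 * i + (s + 2 * i) = r + s + 4 * i by ring,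
    show r + 2 * i - (s + 2 * i) = -(s - r) by ring, h.V_neg hq, pow_natAbs_add hq s,
    pow_natAbs_of_even hq (even_two_mul i), mul_one, hs]
  linear_combination (-q ^ r.natAbs * V (s - r)) * pow_natAbs_mul_self hq (s - r)

theorem delta_mul_sum (h : IsLucasPair p q U V) (hq : q * q = 1) (r s : ℤ) (N : ℕ) :
    (p ^ 2 - 4 * q) * ∑ i ∈ range N, (-1 : R) ^ i * (U (r + 2 * i) * U (s + 2 * i)) =
      ∑ i ∈ range N, (-1 : R) ^ i * V (r + s + 4 * i) -
        (∑ i ∈ range N, (-1 : R) ^ i) * (q ^ r.natAbs * V (s - r)) := by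
  rw [mul_sum, sum_mul, ← sum_sub_distrib]
  refine sum_congr rfl fun i _ => ?_
  rw [mul_left_comm, h.delta_mul_U_mul_U_add_two_mul hq]
  ring

theorem V_two_mul_sum_odd (h : IsLucasPair p q U V) (hq : q * q = 1) {d : R} {m : ℕ}
    (hd : V 2 * d = V (4 * m + 2)) (r s : ℤ) :
    V 2 * ((p ^ 2 - 4 * q) *
        ∑ i ∈ range (2 * m + 1), (-1 : R) ^ i * (U (r + 2 * i) * U (s + 2 * i))) =
      V 2 * (d * V (4 * m + r + s) - q ^ r.natAbs * V (s - r)) := by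
  have hprod := h.V_mul_V hq (4 * m + r + s) (4 * m + 2)
  rw [pow_natAbs_of_even hq ⟨2 * m + 1, by ring⟩, one_mul,
    show 4 * (m : ℤ) + r + s - (4 * m + 2) = r + s - 2 by ring] at hprod
  have htel := h.V_two_mul_sum hq (r + s) (2 * m + 1)
  rw [Odd.neg_one_pow ⟨m, rfl⟩, show r + s + 4 * ((2 * m + 1 : ℕ) : ℤ) - 2 =
    4 * m + r + s + (4 * m + 2) by push_cast; ring] at htel
  rw [h.delta_mul_sum hq, neg_one_geom_sum, if_neg (Nat.not_even_iff_odd.mpr ⟨m, rfl⟩)]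
  linear_combination htel - hprod - V (4 * m + r + s) * hd

theorem U_four_mul_sum_even (h : IsLucasPair p q U V) (hq : q * q = 1) {c : R} {m : ℕ}
    (hc : U 4 * c = U (4 * m + 4)) (r s : ℤ) :
    U 4 * ((p ^ 2 - 4 * q) *
        ∑ i ∈ range (2 * m + 2), (-1 : R) ^ i * (U (r + 2 * i) * U (s + 2 * i))) =
      U 4 * -(p * (p ^ 2 - 4 * q) * c * U (4 * m + r + s + 2)) := by
  have hprod := h.delta_mul_U_mul_U hq (4 * m + r + s + 2) (4 * m + 4)
  rw [pow_natAbs_of_even hq ⟨2 * m + 2, by ring⟩, one_mul,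
    show 4 * (m : ℤ) + r + s + 2 - (4 * m + 4) = r + s - 2 by ring] at hprod
  have htel := h.V_two_mul_sum hq (r + s) (2 * m + 2)
  rw [Even.neg_one_pow ⟨m + 1, by ring⟩, show r + s + 4 * ((2 * m + 2 : ℕ) : ℤ) - 2 =
    4 * m + r + s + 2 + (4 * m + 4) by push_cast; ring] at htel
  rw [h.delta_mul_sum hq, neg_one_geom_sum, if_pos ⟨m + 1, by ring⟩, h.U_four]
  rw [h.U_four] at hc
  linear_combination p * htel + p * hprod + p * (p ^ 2 - 4 * q) * U (4 * m + r + s + 2) * hc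

end IsLucasPair

theorem Int.sq_sub_two_mul_ne_zero {p q : ℤ} (hq : q = 1 ∨ q = -1) : p ^ 2 - 2 * q ≠ 0 := by
  intro h
  have h4 := congrArg (Int.cast : ℤ → ZMod 4) h
  push_cast at h4
  generalize (p : ZMod 4) = x at h4
  rcases hq with rfl | rfl <;> revert x h4 <;> decide

theorem stmt_9_general (p q : ℤ) (hp : p ≠ 0) (hq : q = 1 ∨ q = -1)
    (U V : ℤ → ℤ)
    (hU0 : U 0 = 0) (hU1 : U 1 = 1)
    (hUrec : ∀ n : ℤ, U n = p * U (n - 1) - q * U (n - 2))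
    (hV0 : V 0 = 2) (hV1 : V 1 = p)
    (hVrec : ∀ n : ℤ, V n = p * V (n - 1) - q * V (n - 2))
    (c d : ℤ → ℤ) (hc : ∀ n : ℤ, U 4 * c n = U (4 * n + 4)) (hd : ∀ n : ℤ, V 2 * d n = V (4 * n + 2))
    (r s : ℤ) (m : ℕ) :
    (p ^ 2 - 4 * q) * (∑ i ∈ Finset.range (2 * m + 1), (-1 : ℤ) ^ i * (U (r + 2 * i) * U (s + 2 * i))) =
        d m * V (4 * m + r + s) - q ^ r.natAbs * V (s - r) ∧
      (p ^ 2 - 4 * q) * (∑ i ∈ Finset.range (2 * m + 2), (-1 : ℤ) ^ i * (U (r + 2 * i) * U (s + 2 * i))) =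
        -(p * (p ^ 2 - 4 * q) * c m * U (4 * m + r + s + 2)) := by
  have hqq : q * q = 1 := by rcases hq with rfl | rfl <;> norm_num
  have h : IsLucasPair p q U V :=
    ⟨.of_forall_eq_sub hUrec, .of_forall_eq_sub hVrec, hU0, hU1, hV0, hV1⟩
  have hV2 : V 2 ≠ 0 := h.V_two ▸ Int.sq_sub_two_mul_ne_zero hq
  have hU4 : U 4 ≠ 0 := h.U_four ▸ mul_ne_zero hp hV2
  exact ⟨mul_left_cancel₀ hV2 (h.V_two_mul_sum_odd hqq (hd m) r s),
    mul_left_cancel₀ hU4 (h.U_four_mul_sum_even hqq (hc m) r s)⟩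

theorem stmt_9 (p q : ℤ) (hp : p ≠ 0) (hq : q = 1 ∨ q = -1)
    (hΔ : p ^ 2 - 4 * q ≠ 0)
    (U V : ℤ → ℤ)
    (hU0 : U 0 = 0) (hU1 : U 1 = 1)
    (hUrec : ∀ n : ℤ, U n = p * U (n - 1) - q * U (n - 2))
    (hV0 : V 0 = 2) (hV1 : V 1 = p)
    (hVrec : ∀ n : ℤ, V n = p * V (n - 1) - q * V (n - 2))
    (c d : ℤ → ℤ) (hc : ∀ n : ℤ, U 4 * c n = U (4 * n + 4)) (hd : ∀ n : ℤ, V 2 * d n = V (4 * n + 2))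
    (r s : ℤ) (m : ℕ) :
    (p ^ 2 - 4 * q) * (∑ i ∈ Finset.range (2 * m + 1), (-1 : ℤ) ^ i * (U (r + 2 * i) * U (s + 2 * i))) =
        d m * V (4 * m + r + s) - q ^ r.natAbs * V (s - r) ∧
      (p ^ 2 - 4 * q) * (∑ i ∈ Finset.range (2 * m + 2), (-1 : ℤ) ^ i * (U (r + 2 * i) * U (s + 2 * i))) =
        -(p * (p ^ 2 - 4 * q) * c m * U (4 * m + r + s + 2)) :=
  stmt_9_general p q hp hq U V hU0 hU1 hUrec hV0 hV1 hVrec c d hc hd r s m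
end
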